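/- Let (Ω, μ) be a probability space and f, f̃ : Ω → ℝ integrable functions with f², f̃² integrable. Let Q₁, Q₂ ∈ ℝ, and suppose there is a constant C ≥ 0 with sup_Ω |f| ≤ C, sup_Ω |f̃| ≤ C, |𝔼_μ[f]| ≤ C, and |Q₁| ≤ C. Define ε_I(f) = sup_{x ∈ Ω} |f(x) − f̃(x)|, ε_Q(f) = |𝔼_μ[f̃] − Q₁|, and ε_Q(f²) = |𝔼_μ[f̃²] − Q₂|. Then the error in the approximated variance satisfies |Var_μ(f) − (Q₂ − Q₁²)| ≤ 4C·ε_I(f) + 2C·ε_Q(f) + ε_Q(f²), where Var_μ(f) = 𝔼_μ[f²] − 𝔼_μ[f]². -/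
import Mathlib


open MeasureTheory

/-- error of the approximated variance.  With `C ≥ 0` bounding `|f|`, `|f̃|`,
`|𝔼[f]|` and `|Q₁|`, and `ε_I(f) = sup_x |f x − f̃ x|`, `ε_Q(f) = |𝔼[f̃] − Q₁|`,
`ε_Q(f²) = |𝔼[f̃²] − Q₂|`, one has
`|Var(f) − (Q₂ − Q₁²)| ≤ 4C·ε_I(f) + 2C·ε_Q(f) + ε_Q(f²)`,
where `Var(f) = 𝔼[f²] − 𝔼[f]²`. -/
theorem variance_error_bound
    {Ω : Type*} [MeasurableSpace Ω] (μ : Measure Ω) [IsProbabilityMeasure μ]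
    (f ftilde : Ω → ℝ) (Q₁ Q₂ : ℝ) (C : ℝ) (hC : 0 ≤ C)
    (hf : Integrable f μ) (hftilde : Integrable ftilde μ)
    (hf2 : Integrable (fun x => (f x) ^ 2) μ)
    (hftilde2 : Integrable (fun x => (ftilde x) ^ 2) μ)
    (hfC : ∀ x, |f x| ≤ C) (hftC : ∀ x, |ftilde x| ≤ C)
    (hEC : |∫ x, f x ∂μ| ≤ C) (hQC : |Q₁| ≤ C) :
    |((∫ x, (f x) ^ 2 ∂μ) - (∫ x, f x ∂μ) ^ 2) - (Q₂ - Q₁ ^ 2)| ≤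
      4 * C * (⨆ x, |f x - ftilde x|) + 2 * C * |(∫ x, ftilde x ∂μ) - Q₁|
        + |(∫ x, (ftilde x) ^ 2 ∂μ) - Q₂| := by
  have hne : Nonempty Ω := by
    by_contra h
    have : μ Set.univ = 0 := by
      rw [Set.univ_eq_empty_iff.mpr (not_nonempty_iff.mp h)]; simp
    simp [measure_univ] at this
  set εI := ⨆ x, |f x - ftilde x| with hεIdef
  have hbdd : BddAbove (Set.range fun x => |f x - ftilde x|) := by
    refine ⟨2 * C, ?_⟩
    rintro _ ⟨x, rfl⟩
    calc |f x - ftilde x| ≤ |f x| + |ftilde x| := abs_sub _ _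
      _ ≤ C + C := add_le_add (hfC x) (hftC x)
      _ = 2 * C := by ring
  have hεI : ∀ x, |f x - ftilde x| ≤ εI := fun x => le_ciSup hbdd x
  have hεI0 : 0 ≤ εI := le_trans (abs_nonneg _) (hεI (Classical.arbitrary Ω))
  -- bound on |∫f - ∫f̃|
  have h2 : |(∫ x, f x ∂μ) - ∫ x, ftilde x ∂μ| ≤ εI := by
    rw [← integral_sub hf hftilde]
    calc |∫ x, (f x - ftilde x) ∂μ| = ‖∫ x, (f x - ftilde x) ∂μ‖ := rfl
      _ ≤ εI * (μ Set.univ).toReal :=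
        norm_integral_le_of_norm_le_const (Filter.Eventually.of_forall fun x => hεI x)
      _ = εI := by simp
  -- bound on |∫f² - ∫f̃²|
  have h1 : |(∫ x, (f x) ^ 2 ∂μ) - ∫ x, (ftilde x) ^ 2 ∂μ| ≤ 2 * C * εI := by
    rw [← integral_sub hf2 hftilde2]
    calc |∫ x, ((f x) ^ 2 - (ftilde x) ^ 2) ∂μ|
        = ‖∫ x, ((f x) ^ 2 - (ftilde x) ^ 2) ∂μ‖ := rfl
      _ ≤ 2 * C * εI * (μ Set.univ).toReal := by
          apply norm_integral_le_of_norm_le_const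
          refine Filter.Eventually.of_forall fun x => ?_
          have : (f x) ^ 2 - (ftilde x) ^ 2 = (f x + ftilde x) * (f x - ftilde x) := by ring
          rw [Real.norm_eq_abs, this, abs_mul]
          have hsum : |f x + ftilde x| ≤ 2 * C := by
            calc |f x + ftilde x| ≤ |f x| + |ftilde x| := abs_add_le _ _
              _ ≤ C + C := add_le_add (hfC x) (hftC x)
              _ = 2 * C := by ring
          exact mul_le_mul hsum (hεI x) (abs_nonneg _) (by linarith)
      _ = 2 * C * εI := by simp
  -- bound on |(∫f)² - Q₁²|
  have h3 : |(∫ x, f x ∂μ) ^ 2 - Q₁ ^ 2| ≤ 2 * C * (εI + |(∫ x, ftilde x ∂μ) - Q₁|) := by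
    have heq : (∫ x, f x ∂μ) ^ 2 - Q₁ ^ 2
        = ((∫ x, f x ∂μ) + Q₁) * ((∫ x, f x ∂μ) - Q₁) := by ring
    rw [heq, abs_mul]
    have hsum : |(∫ x, f x ∂μ) + Q₁| ≤ 2 * C := by
      calc |(∫ x, f x ∂μ) + Q₁| ≤ |∫ x, f x ∂μ| + |Q₁| := abs_add_le _ _
        _ ≤ C + C := add_le_add hEC hQC
        _ = 2 * C := by ring
    have hdiff : |(∫ x, f x ∂μ) - Q₁| ≤ εI + |(∫ x, ftilde x ∂μ) - Q₁| := by
      calc |(∫ x, f x ∂μ) - Q₁|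
          = |((∫ x, f x ∂μ) - ∫ x, ftilde x ∂μ) + ((∫ x, ftilde x ∂μ) - Q₁)| := by ring_nf
        _ ≤ |(∫ x, f x ∂μ) - ∫ x, ftilde x ∂μ| + |(∫ x, ftilde x ∂μ) - Q₁| := abs_add_le _ _
        _ ≤ εI + |(∫ x, ftilde x ∂μ) - Q₁| := by linarith
    exact mul_le_mul hsum hdiff (abs_nonneg _) (by linarith)
  calc |((∫ x, (f x) ^ 2 ∂μ) - (∫ x, f x ∂μ) ^ 2) - (Q₂ - Q₁ ^ 2)|
      = |((∫ x, (f x) ^ 2 ∂μ) - ∫ x, (ftilde x) ^ 2 ∂μ)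
          + ((∫ x, (ftilde x) ^ 2 ∂μ) - Q₂) - ((∫ x, f x ∂μ) ^ 2 - Q₁ ^ 2)| := by ring_nf
    _ ≤ |((∫ x, (f x) ^ 2 ∂μ) - ∫ x, (ftilde x) ^ 2 ∂μ)
          + ((∫ x, (ftilde x) ^ 2 ∂μ) - Q₂)| + |(∫ x, f x ∂μ) ^ 2 - Q₁ ^ 2| := abs_sub _ _
    _ ≤ |(∫ x, (f x) ^ 2 ∂μ) - ∫ x, (ftilde x) ^ 2 ∂μ|
          + |(∫ x, (ftilde x) ^ 2 ∂μ) - Q₂| + |(∫ x, f x ∂μ) ^ 2 - Q₁ ^ 2| := by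
        gcongr; exact abs_add_le _ _
    _ ≤ 4 * C * εI + 2 * C * |(∫ x, ftilde x ∂μ) - Q₁|
          + |(∫ x, (ftilde x) ^ 2 ∂μ) - Q₂| := by nlinarith [abs_nonneg ((∫ x, ftilde x ∂μ) - Q₁)]
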